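/- Let ∇ be a Cartan connection on L and suppose the anchor ρ : L → Der_R(A) is surjective (the transitive case). Then ∇ is flat, i.e. R∇(V, W)Z = 0 for all V, W ∈ Der_R(A) and Z ∈ L, if and only if the torsion T∇̄ is ∇̄-parallel: ∇̄_Z(T∇̄(X, Y)) − T∇̄(∇̄_Z X, Y) − T∇̄(X, ∇̄_Z Y) = 0 for all X, Y, Z ∈ L. (Algebraic content of Corollary 5.4: a transitive Cartan algebroid is locally symmetric if and only if T∇̄ is ∇̄-parallel.) -/
import Mathlib


variable {R A L : Type*} [CommRing R] [CommRing A] [Algebra R A]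
  [LieRing L] [LieAlgebra R L] [Module A L]
  [IsScalarTower R A L] [SMulCommClass R A L] [SMulCommClass A R L]

/-- The induced `𝔤`-connection on derivations: `∇̄_X V := ρ(∇_V X) + ⁅ρ(X), V⁆`. -/
def barDer (ρ : L →ₗ[A] Derivation R A A) (D : Derivation R A A → L → L)
    (X : L) (V : Derivation R A A) : Derivation R A A :=
  ρ (D V X) + ⁅ρ X, V⁆

/-- The induced `𝔤`-connection of `L` on itself: `∇̄_X Y := ∇_{ρ(Y)} X + ⁅X, Y⁆`. -/
def barSelf (ρ : L →ₗ[A] Derivation R A A) (D : Derivation R A A → L → L)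
    (X Y : L) : L :=
  D (ρ Y) X + ⁅X, Y⁆

/-- The torsion `T∇̄(X, Y) := ∇̄_X Y − ∇̄_Y X − ⁅X, Y⁆` of `∇̄`. -/
def torsionBarSelf (ρ : L →ₗ[A] Derivation R A A) (D : Derivation R A A → L → L)
    (X Y : L) : L :=
  barSelf ρ D X Y - barSelf ρ D Y X - ⁅X, Y⁆

/-- The curvature `R∇(V, W)Z := ∇_V(∇_W Z) − ∇_W(∇_V Z) − ∇_{⁅V,W⁆} Z` of `∇`. -/
def curvConn (D : Derivation R A A → L → L) (V W : Derivation R A A) (Z : L) : L :=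
  D V (D W Z) - D W (D V Z) - D ⁅V, W⁆ Z

/-- `D` is a connection on `L`: additive in both arguments, `A`-linear in the
derivation argument, and satisfying the Leibniz rule. -/
def IsConnection (D : Derivation R A A → L → L) : Prop :=
  (∀ (V W : Derivation R A A) (X : L), D (V + W) X = D V X + D W X) ∧
  (∀ (V : Derivation R A A) (X Y : L), D V (X + Y) = D V X + D V Y) ∧
  (∀ (a : A) (V : Derivation R A A) (X : L), D (a • V) X = a • D V X) ∧
  (∀ (V : Derivation R A A) (a : A) (X : L), D V (a • X) = a • D V X + V a • X)

/-- `D` is a Cartan connection: it is compatible with the bracket of `L`. -/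
def IsCartanConnection (ρ : L →ₗ[A] Derivation R A A)
    (D : Derivation R A A → L → L) : Prop :=
  ∀ (V : Derivation R A A) (X Y : L),
    D V ⁅X, Y⁆ = ⁅D V X, Y⁆ + ⁅X, D V Y⁆
      + D (barDer ρ D Y V) X - D (barDer ρ D X V) Y


private theorem key_curv_eq (ρ : L →ₗ[A] Derivation R A A)
    (hanchor : ∀ X Y : L, ρ ⁅X, Y⁆ = ⁅ρ X, ρ Y⁆)
    (D : Derivation R A A → L → L)
    (hDa : ∀ (V W : Derivation R A A) (X : L), D (V + W) X = D V X + D W X)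
    (hDb : ∀ (V : Derivation R A A) (X Y : L), D V (X + Y) = D V X + D V Y)
    (hC : IsCartanConnection ρ D) (X Y Z : L) :
    barSelf ρ D Z (torsionBarSelf ρ D X Y)
      - torsionBarSelf ρ D (barSelf ρ D Z X) Y
      - torsionBarSelf ρ D X (barSelf ρ D Z Y) = curvConn D (ρ X) (ρ Y) Z := by
  have hD0 : ∀ X : L, D 0 X = 0 := fun X => by
    have h := hDa 0 0 X; rw [add_zero] at h; exact left_eq_add.mp h
  have hDneg : ∀ (V : Derivation R A A) (X : L), D (-V) X = - D V X := fun V X => by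
    have h := hDa V (-V) X; rw [add_neg_cancel, hD0] at h
    exact eq_neg_of_add_eq_zero_right h.symm
  have hDsub : ∀ (V W : Derivation R A A) (X : L), D (V - W) X = D V X - D W X :=
    fun V W X => by rw [sub_eq_add_neg, hDa, hDneg, sub_eq_add_neg]
  have hC' : ∀ (V : Derivation R A A) (X Y : L),
      D V ⁅X, Y⁆ = ⁅D V X, Y⁆ + ⁅X, D V Y⁆
        + D (barDer ρ D Y V) X - D (barDer ρ D X V) Y := hC
  simp only [torsionBarSelf, barSelf, curvConn, hC', barDer, map_add, map_sub, hanchor,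
    hDa, hDsub, hDb, lie_add, add_lie, lie_sub, sub_lie, lie_neg, neg_lie]
  rw [show (⁅ρ Y, ρ X⁆ : Derivation R A A) = -⁅ρ X, ρ Y⁆ from (lie_skew _ _).symm, hDneg]
  rw [show (⁅Y, X⁆ : L) = -⁅X, Y⁆ from (lie_skew _ _).symm]
  rw [show (⁅Y, D (ρ X) Z⁆ : L) = -⁅D (ρ X) Z, Y⁆ from (lie_skew _ _).symm]
  rw [show (⁅Y, ⁅Z, X⁆⁆ : L) = -⁅⁅Z, X⁆, Y⁆ from (lie_skew _ _).symm]
  rw [show (⁅D (ρ Y) Z, X⁆ : L) = -⁅X, D (ρ Y) Z⁆ from (lie_skew _ _).symm]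
  rw [show (⁅⁅Z, Y⁆, X⁆ : L) = -⁅X, ⁅Z, Y⁆⁆ from (lie_skew _ _).symm]
  simp only [lie_neg, neg_neg, leibniz_lie Z X Y]
  abel

/-- For a Cartan connection `∇` on a transitive `L` (surjective
anchor), `∇` is flat if and only if the torsion `T∇̄` is `∇̄`-parallel. -/
theorem transitive_flat_iff_torsion_parallel
    (ρ : L →ₗ[A] Derivation R A A)
    (hanchor : ∀ X Y : L, ρ ⁅X, Y⁆ = ⁅ρ X, ρ Y⁆)
    (hleib : ∀ (X : L) (a : A) (Y : L), ⁅X, a • Y⁆ = a • ⁅X, Y⁆ + ρ X a • Y)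
    (D : Derivation R A A → L → L) (hD : IsConnection D)
    (hC : IsCartanConnection ρ D)
    (hsurj : Function.Surjective ρ) :
    (∀ (V W : Derivation R A A) (Z : L), curvConn D V W Z = 0) ↔
      (∀ X Y Z : L,
        barSelf ρ D Z (torsionBarSelf ρ D X Y)
          - torsionBarSelf ρ D (barSelf ρ D Z X) Y
          - torsionBarSelf ρ D X (barSelf ρ D Z Y) = 0) := by
  constructor
  · intro hflat X Y Z
    rw [key_curv_eq ρ hanchor D hD.1 hD.2.1 hC X Y Z]
    exact hflat _ _ _
  · intro hpar V W Z
    obtain ⟨X, rfl⟩ := hsurj V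
    obtain ⟨Y, rfl⟩ := hsurj W
    rw [← key_curv_eq ρ hanchor D hD.1 hD.2.1 hC X Y Z]
    exact hpar X Y Z
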